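/- Let N ≥ 1 and let U ⊂ ℝ^N be a closed set. Then U is convex if and only if 𝒪(x) ≤ 0 for every x ∈ ℝ^N ∖ U. (In particular, every nonempty convex set U satisfies 𝒪(x) ≤ 0 for every x ∉ cl(U).) -/

import Mathlib

open Filter Metric Set
open scoped Topology

noncomputable section

/-- The set `π_x` of orthogonal projections of `x` onto `cl(U)`. -/
def projSet {N : ℕ} (U : Set (EuclideanSpace ℝ (Fin N))) (x : EuclideanSpace ℝ (Fin N)) :
    Set (EuclideanSpace ℝ (Fin N)) :=
  {ξ ∈ closure U | dist x ξ = Metric.infDist x U}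

/-- The opening `𝒪(x)` of `U` at `x`, as an extended real number:
`𝒪(x) = sup { ((x-ξ)/|x-ξ|)·((y-ξ)/|y-ξ|) : ξ ∈ π_x, y ∈ U∖{ξ} }`,
the supremum over the empty set being `-∞` (which covers the convention for
`U` empty or a singleton). -/
def opening {N : ℕ} (U : Set (EuclideanSpace ℝ (Fin N))) (x : EuclideanSpace ℝ (Fin N)) :
    EReal :=
  sSup ((fun p : EuclideanSpace ℝ (Fin N) × EuclideanSpace ℝ (Fin N) =>
      ((inner ℝ (‖x - p.1‖⁻¹ • (x - p.1)) (‖p.2 - p.1‖⁻¹ • (p.2 - p.1)) : ℝ) : EReal)) ''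
    {p | p.1 ∈ projSet U x ∧ p.2 ∈ U \ {p.1}})

/-!
For convex `U`, the nearest points `ξ ∈ cl(U)` to `x` are characterised by `⟪x - ξ, y - ξ⟫ ≤ 0`
for all `y ∈ U`, and this is `𝒪(x) ≤ 0`. Conversely, these inequalities persist on the half-space
`{y | ⟪x - ξ, y - ξ⟫ ≤ 0}`, hence on the convex hull of `U`; for `x` itself they read
`‖x - ξ‖² ≤ 0`. So a point of the hull of a closed `U` with `𝒪 ≤ 0` is its own nearest point.
-/

open scoped InnerProductSpace

section InnerProductSpace

variable {E : Type*} [NormedAddCommGroup E] [InnerProductSpace ℝ E]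

theorem real_inner_inv_norm_smul_nonpos_iff (u v : E) :
    ⟪‖u‖⁻¹ • u, ‖v‖⁻¹ • v⟫_ℝ ≤ 0 ↔ ⟪u, v⟫_ℝ ≤ 0 := by
  rcases eq_or_ne u 0 with rfl | hu
  · simp
  rcases eq_or_ne v 0 with rfl | hv
  · simp
  have hpos : 0 < ‖u‖⁻¹ * ‖v‖⁻¹ := by positivity
  rw [real_inner_smul_left, real_inner_smul_right, ← mul_assoc]
  have := mul_le_mul_iff_right₀ (b := ⟪u, v⟫_ℝ) (c := 0) hpos
  rwa [mul_zero] at this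

theorem convex_setOf_inner_sub_nonpos (v ξ : E) : Convex ℝ {y : E | ⟪v, y - ξ⟫_ℝ ≤ 0} := by
  simp_rw [inner_sub_right, sub_nonpos]
  exact convex_halfSpace_le (innerₛₗ ℝ v).isLinear _

theorem eq_of_mem_convexHull_of_inner_sub_nonpos {s : Set E} {x ξ : E}
    (hx : x ∈ convexHull ℝ s) (h : ∀ y ∈ s, ⟪x - ξ, y - ξ⟫_ℝ ≤ 0) : x = ξ := by
  have hxx : ⟪x - ξ, x - ξ⟫_ℝ ≤ 0 := convexHull_min h (convex_setOf_inner_sub_nonpos _ _) hx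
  rwa [real_inner_self_nonpos, sub_eq_zero] at hxx

end InnerProductSpace

section Opening

variable {N : ℕ} {U : Set (EuclideanSpace ℝ (Fin N))} {x ξ : EuclideanSpace ℝ (Fin N)}

theorem projSet_nonempty (hU : U.Nonempty) : (projSet U x).Nonempty := by
  obtain ⟨ξ, hξ, hdist⟩ := isClosed_closure.exists_infDist_eq_dist hU.closure x
  exact ⟨ξ, hξ, by rw [← hdist, infDist_closure]⟩

theorem Convex.inner_sub_nonpos_of_mem_projSet (hconv : Convex ℝ U) (hξ : ξ ∈ projSet U x)
    {y : EuclideanSpace ℝ (Fin N)} (hy : y ∈ closure U) : ⟪x - ξ, y - ξ⟫_ℝ ≤ 0 := by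
  refine (norm_eq_iInf_iff_real_inner_le_zero hconv.closure hξ.1).mp ?_ y hy
  simpa only [← dist_eq_norm, ← infDist_eq_iInf, infDist_closure] using hξ.2

theorem opening_nonpos_iff :
    opening U x ≤ 0 ↔ ∀ ξ ∈ projSet U x, ∀ y ∈ U, ⟪x - ξ, y - ξ⟫_ℝ ≤ 0 := by
  simp only [opening, sSup_le_iff, forall_mem_image, EReal.coe_nonpos, Prod.forall,
    mem_ofPred_eq, Set.mem_sdiff, mem_singleton_iff, and_imp, real_inner_inv_norm_smul_nonpos_iff]
  constructor
  · intro h ξ hξ y hy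
    rcases eq_or_ne y ξ with rfl | hyξ
    · simp
    · exact h ξ y hξ hy hyξ
  · exact fun h ξ y hξ hy _ => h ξ hξ y hy

end Opening

theorem convex_iff_opening_nonpos_general
    (N : ℕ)
    (U : Set (EuclideanSpace ℝ (Fin N))) (hU : IsClosed U) :
    Convex ℝ U ↔ ∀ x ∉ U, opening U x ≤ 0 := by
  constructor
  · intro hconv x _
    exact opening_nonpos_iff.mpr fun ξ hξ y hy =>
      hconv.inner_sub_nonpos_of_mem_projSet hξ (subset_closure hy)
  · intro h
    refine convexHull_eq_self.mp <| (subset_convexHull ℝ U).antisymm' fun x hx => ?_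
    by_contra hxU
    obtain ⟨ξ, hξ⟩ := projSet_nonempty (x := x) (convexHull_nonempty_iff.mp ⟨x, hx⟩)
    have hnonpos := opening_nonpos_iff.mp (h x hxU) ξ hξ
    rw [eq_of_mem_convexHull_of_inner_sub_nonpos hx hnonpos, ← hU.closure_eq] at hxU
    exact hxU hξ.1

/-- A closed set `U ⊆ ℝ^N` is convex if and only if its opening satisfies `𝒪(x) ≤ 0`
for every `x ∈ ℝ^N ∖ U`. -/
theorem convex_iff_opening_nonpos
    (N : ℕ) (hN : 1 ≤ N)
    (U : Set (EuclideanSpace ℝ (Fin N))) (hU : IsClosed U) :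
    Convex ℝ U ↔ ∀ x ∉ U, opening U x ≤ 0 :=
  convex_iff_opening_nonpos_general N U hU

end
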